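/- arXiv:2204.08187 — 6 statements merged into one kernel-verified Lean document; each statement's English description precedes it below -/
import Mathlib

section
/- The long-time average queue length X̄(λ, μ, f) = (λ/μ)·(r−f')(f'−f)/(λ(r−f') + μ(r−f)) is strictly increasing in λ on the region where f' < r < (μf + λf')/(λ+μ): its partial derivative with respect to λ is strictly positive. -/
/-! As a function of λ, X̄ is the Möbius map `λ ↦ λ p / (λ a + b)`, whose derivative
`p b / (λ a + b)²` is positive since `p b = (r - f') (f' - f) (r - f)` is a product of one positive
and two negative factors. -/

theorem hasDerivAt_mul_div_linear {𝕜 : Type*} [NontriviallyNormedField 𝕜] (p a b x : 𝕜)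
    (hx : x * a + b ≠ 0) :
    HasDerivAt (fun t => t * p / (t * a + b)) (p * b / (x * a + b) ^ 2) x := by
  have hnum : HasDerivAt (fun t => t * p) p x := by
    simpa using (hasDerivAt_id x).mul_const p
  have hden : HasDerivAt (fun t => t * a + b) a x := by
    simpa using ((hasDerivAt_id x).mul_const a).add_const b
  exact (hnum.div hden hx).congr_deriv (by ring)

theorem stmt_5_general (mu f f' r lam : ℝ)
    (hmu : 0 < mu) (hr1 : f' < r) (hr2 : r < f)
    (hstab : lam * (r - f') + mu * (r - f) < 0) :
    0 < deriv (fun l : ℝ =>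
      (l / mu) * ((r - f') * (f' - f)) / (l * (r - f') + mu * (r - f))) lam := by
  have hderiv := hasDerivAt_mul_div_linear ((r - f') * (f' - f) / mu) (r - f') (mu * (r - f))
    lam hstab.ne
  have hfun : (fun l : ℝ => (l / mu) * ((r - f') * (f' - f)) / (l * (r - f') + mu * (r - f))) =
      fun l => l * ((r - f') * (f' - f) / mu) / (l * (r - f') + mu * (r - f)) := by
    funext l
    ring
  have hnum : (r - f') * (f' - f) / mu * (mu * (r - f)) = (r - f') * ((f' - f) * (r - f)) := by
    field_simp
  rw [hfun, hderiv.deriv, hnum]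
  have hpos : 0 < (r - f') * ((f' - f) * (r - f)) :=
    mul_pos (sub_pos.mpr hr1) (mul_pos_of_neg_of_neg (by linarith) (sub_neg.mpr hr2))
  exact div_pos hpos (sq_pos_of_ne_zero hstab.ne)

/-- X̄ is strictly increasing in λ on the stable region: ∂X̄/∂λ > 0. -/
theorem stmt_5 (mu f f' r lam : ℝ)
    (hmu : 0 < mu) (hf' : 0 ≤ f') (hr1 : f' < r) (hr2 : r < f)
    (hlam : 0 < lam) (hstab : lam * (r - f') + mu * (r - f) < 0) :
    0 < deriv (fun l : ℝ =>
      (l / mu) * ((r - f') * (f' - f)) / (l * (r - f') + mu * (r - f))) lam :=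
  stmt_5_general mu f f' r lam hmu hr1 hr2 hstab
end

section
/- With f' = ηf for fixed η ∈ (0,1), X̄(λ, μ, f) = (λ/μ)·(r−ηf)(ηf−f)/(λ(r−ηf) + μ(r−f)) is strictly decreasing in f on the interval ( (λ+μ)r/(ηλ+μ), r/η ) ∩ (r, ∞) where the stability condition holds. -/
/-- With f' = ηf, X̄ is strictly decreasing in f on the interval
((λ+μ)r/(ηλ+μ), r/η) ∩ (r, ∞) where the stability condition holds. -/
theorem stmt_9 (lam mu η r : ℝ)
    (hlam : 0 < lam) (hmu : 0 < mu) (hη : 0 < η) (hη1 : η < 1) (hr : 0 < r) :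
    StrictAntiOn (fun f : ℝ =>
        (lam / mu) * ((r - η * f) * (η * f - f)) / (lam * (r - η * f) + mu * (r - f)))
      (Set.Ioo ((lam + mu) * r / (η * lam + mu)) (r / η) ∩ Set.Ioi r) := by
  intro a ha b hb hab
  obtain ⟨⟨ha1, ha2⟩, ha3⟩ := ha
  obtain ⟨⟨hb1, hb2⟩, hb3⟩ := hb
  have hELM : 0 < η * lam + mu := by positivity
  rw [div_lt_iff₀ hELM] at ha1 hb1
  rw [lt_div_iff₀ hη] at ha2 hb2
  have hapos : 0 < a := lt_trans hr ha3
  have hbpos : 0 < b := lt_trans hr hb3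
  have hDa : lam * (r - η * a) + mu * (r - a) < 0 := by nlinarith
  have hDb : lam * (r - η * b) + mu * (r - b) < 0 := by nlinarith
  have hc : (0:ℝ) < lam / mu := div_pos hlam hmu
  -- Q > 0
  have hQ : 0 < (lam + mu) * r * r - η * (lam + mu) * r * (a + b)
      + η * (η * lam + mu) * a * b := by
    nlinarith [mul_pos (mul_pos hη hbpos) (sub_pos.mpr ha1),
      mul_pos (mul_pos (mul_pos (by linarith : (0:ℝ) < lam + mu) hr) hr) (sub_pos.mpr hb2),
      mul_pos (by linarith : (0:ℝ) < lam + mu) hr, sub_pos.mpr ha2]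
  have hMain : (lam / mu) * ((r - η * b) * (η * b - b)) * (lam * (r - η * a) + mu * (r - a))
      < (lam / mu) * ((r - η * a) * (η * a - a)) * (lam * (r - η * b) + mu * (r - b)) := by
    have hEq : (lam / mu) * ((r - η * b) * (η * b - b)) * (lam * (r - η * a) + mu * (r - a))
        - (lam / mu) * ((r - η * a) * (η * a - a)) * (lam * (r - η * b) + mu * (r - b))
        = -((lam / mu) * (1 - η) * (b - a) * ((lam + mu) * r * r
          - η * (lam + mu) * r * (a + b) + η * (η * lam + mu) * a * b)) := by ring
    have hpos : 0 < (lam / mu) * (1 - η) * (b - a) * ((lam + mu) * r * r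
        - η * (lam + mu) * r * (a + b) + η * (η * lam + mu) * a * b) := by
      apply mul_pos (mul_pos (mul_pos hc (by linarith)) (by linarith)) hQ
    linarith
  simp only
  rw [← neg_div_neg_eq ((lam / mu) * ((r - η * b) * (η * b - b)))
      (lam * (r - η * b) + mu * (r - b)),
    ← neg_div_neg_eq ((lam / mu) * ((r - η * a) * (η * a - a)))
      (lam * (r - η * a) + mu * (r - a)),
    div_lt_div_iff₀ (by linarith) (by linarith)]
  nlinarith [hMain]
end

section
/- The attacker's utility u₁(λ, f) = c₀·X̄(λ, μ, f) − c₁λ is convex in λ on the stability region; consequently its maximum over λ ∈ [0, λ̄] is attained at λ = 0 or λ = λ̄. -/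
lemma inv_conv_aux {dx dy t s : ℝ} (hdx : 0 < dx) (hdy : 0 < dy)
    (ht : 0 ≤ t) (hs : 0 ≤ s) (hts : t + s = 1) :
    (t * dx + s * dy)⁻¹ ≤ t * dx⁻¹ + s * dy⁻¹ := by
  have hd : 0 < t * dx + s * dy := by
    have h1 : t * min dx dy ≤ t * dx := mul_le_mul_of_nonneg_left (min_le_left _ _) ht
    have h2 : s * min dx dy ≤ s * dy := mul_le_mul_of_nonneg_left (min_le_right _ _) hs
    have h3 : 0 < min dx dy := lt_min hdx hdy
    nlinarith
  rw [inv_eq_one_div, div_le_iff₀ hd]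
  have hux : dx * dx⁻¹ = 1 := mul_inv_cancel₀ hdx.ne'
  have huy : dy * dy⁻¹ = 1 := mul_inv_cancel₀ hdy.ne'
  have hkey : 2 ≤ dx⁻¹ * dy + dy⁻¹ * dx := by
    have h : dx⁻¹ * dy + dy⁻¹ * dx - 2 = (dx - dy) ^ 2 * (dx⁻¹ * dy⁻¹) := by
      field_simp
      ring
    nlinarith [sq_nonneg (dx - dy), mul_pos (inv_pos.2 hdx) (inv_pos.2 hdy)]
  have expand : (t * dx⁻¹ + s * dy⁻¹) * (t * dx + s * dy)
      = t ^ 2 + s ^ 2 + t * s * (dx⁻¹ * dy + dy⁻¹ * dx) := by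
    linear_combination t ^ 2 * hux + s ^ 2 * huy
  rw [expand]
  nlinarith [mul_nonneg ht hs, hkey]

/-- The attacker's utility u₁(λ, f) = c₀X̄(λ, μ, f) − c₁λ is convex in λ on
[0, λ̄] (within the stability region), hence its maximum over [0, λ̄] is
attained at λ = 0 or λ = λ̄. -/
theorem stmt_10 (c₀ c₁ mu f f' r lambar : ℝ)
    (hc₀ : 0 < c₀) (hc₁ : 0 < c₁) (hmu : 0 < mu)
    (hf' : 0 ≤ f') (hr1 : f' < r) (hr2 : r < f)
    (hlambar : 0 < lambar) (hstab : lambar * (r - f') + mu * (r - f) < 0) :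
    ConvexOn ℝ (Set.Icc 0 lambar)
      (fun l : ℝ =>
        c₀ * ((l / mu) * ((r - f') * (f' - f)) / (l * (r - f') + mu * (r - f)))
          - c₁ * l) ∧
    ∀ l ∈ Set.Icc (0:ℝ) lambar,
      c₀ * ((l / mu) * ((r - f') * (f' - f)) / (l * (r - f') + mu * (r - f))) - c₁ * l
        ≤ max
          (c₀ * (((0:ℝ) / mu) * ((r - f') * (f' - f)) / (0 * (r - f') + mu * (r - f))) - c₁ * 0)
          (c₀ * ((lambar / mu) * ((r - f') * (f' - f)) / (lambar * (r - f') + mu * (r - f))) - c₁ * lambar) := by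
  have hK : 0 ≤ c₀ * (f' - f) * (r - f) := by nlinarith [mul_pos hc₀ (mul_pos (show (0:ℝ) < f - f' by linarith) (show (0:ℝ) < f - r by linarith))]
  have hden : ∀ l ∈ Set.Icc (0:ℝ) lambar, l * (r - f') + mu * (r - f) < 0 := by
    intro l hl
    have h1 := hl.1
    have h2 := hl.2
    nlinarith
  have key : ∀ l ∈ Set.Icc (0:ℝ) lambar,
      c₀ * ((l / mu) * ((r - f') * (f' - f)) / (l * (r - f') + mu * (r - f))) - c₁ * l
        = c₀ * (f' - f) / mu
            + c₀ * (f' - f) * (r - f) * (-(l * (r - f') + mu * (r - f)))⁻¹ - c₁ * l := by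
    intro l hl
    have hd := hden l hl
    have hd' : l * (r - f') + mu * (r - f) ≠ 0 := hd.ne
    rw [← neg_inv]
    field_simp
    ring
  have hconv : ConvexOn ℝ (Set.Icc 0 lambar)
      (fun l : ℝ =>
        c₀ * ((l / mu) * ((r - f') * (f' - f)) / (l * (r - f') + mu * (r - f)))
          - c₁ * l) := by
    refine ⟨convex_Icc _ _, ?_⟩
    intro x hx y hy t s ht hs hts
    have hz : t • x + s • y ∈ Set.Icc (0:ℝ) lambar :=
      (convex_Icc (0:ℝ) lambar) hx hy ht hs hts
    simp only [smul_eq_mul] at hz ⊢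
    rw [key _ hx, key _ hy, key _ hz]
    have hdx : 0 < -(x * (r - f') + mu * (r - f)) := neg_pos.2 (hden x hx)
    have hdy : 0 < -(y * (r - f') + mu * (r - f)) := neg_pos.2 (hden y hy)
    have hrw : -((t * x + s * y) * (r - f') + mu * (r - f))
        = t * -(x * (r - f') + mu * (r - f)) + s * -(y * (r - f') + mu * (r - f)) := by
      linear_combination (mu * (r - f)) * hts
    rw [hrw]
    have hinv := inv_conv_aux hdx hdy ht hs hts
    have hmul := mul_le_mul_of_nonneg_left hinv hK
    have hC1 : t * (c₀ * (f' - f) / mu) + s * (c₀ * (f' - f) / mu) = c₀ * (f' - f) / mu := by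
      rw [← add_mul, hts, one_mul]
    nlinarith [hmul, hC1]
  refine ⟨hconv, ?_⟩
  intro l hl
  have h0 : (0:ℝ) ∈ Set.Icc (0:ℝ) lambar := ⟨le_refl _, hlambar.le⟩
  have h1 : lambar ∈ Set.Icc (0:ℝ) lambar := ⟨hlambar.le, le_refl _⟩
  have hseg : l ∈ segment ℝ (0:ℝ) lambar := by
    rwa [segment_eq_Icc hlambar.le]
  exact hconv.le_on_segment h0 h1 hseg
end

section
/- The SO's utility u₂(λ̄, f) = −c₀X̄(λ̄, μ, f) − c₂/(f̄ − f) is strictly concave in f on the open interval ((λ̄+μ)r/(ηλ̄+μ), f̄): its second derivative in f is strictly negative. -/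
/-!
`X̄` is a quadratic `p₀ + p₁f + p₂f²` over the affine denominator `D(f) = a + bf`, and such a
quotient has second derivative `2 (p₀b² - p₁ab + p₂a²) / D³`. For `X̄` the constant is
`-λ̄(λ̄+μ)r²(1-η)² < 0`, and on the interval `D < 0`, so `X̄'' > 0`. The second term `-c₂/(f̄ - f)`
has second derivative `-2c₂/(f̄ - f)³ < 0`.
-/

open Filter Topology

variable {𝕜 : Type*} [NontriviallyNormedField 𝕜]

def HasSecondDerivAt (f : 𝕜 → 𝕜) (f'' x : 𝕜) : Prop :=
  ∃ f' : 𝕜 → 𝕜, (∀ᶠ y in 𝓝 x, HasDerivAt f (f' y) y) ∧ HasDerivAt f' f'' x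

namespace HasSecondDerivAt

variable {f g : 𝕜 → 𝕜} {f'' g'' x : 𝕜}

theorem deriv_deriv (h : HasSecondDerivAt f f'' x) : deriv (deriv f) x = f'' := by
  obtain ⟨f', hf, hf'⟩ := h
  exact (EventuallyEq.deriv_eq (hf.mono fun _ hy => hy.deriv)).trans hf'.deriv

theorem sub (hf : HasSecondDerivAt f f'' x) (hg : HasSecondDerivAt g g'' x) :
    HasSecondDerivAt (fun y => f y - g y) (f'' - g'') x := by
  obtain ⟨f', hf, hf'⟩ := hf
  obtain ⟨g', hg, hg'⟩ := hg
  exact ⟨fun y => f' y - g' y, (hf.and hg).mono fun _ h => h.1.sub h.2, hf'.sub hg'⟩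

theorem const_mul (c : 𝕜) (hf : HasSecondDerivAt f f'' x) :
    HasSecondDerivAt (fun y => c * f y) (c * f'') x := by
  obtain ⟨f', hf, hf'⟩ := hf
  exact ⟨fun y => c * f' y, hf.mono fun _ h => h.const_mul c, hf'.const_mul c⟩

end HasSecondDerivAt

theorem hasSecondDerivAt_quadratic_div_affine (p₀ p₁ p₂ a b : 𝕜) {x : 𝕜}
    (hx : a + b * x ≠ 0) :
    HasSecondDerivAt (fun y => (p₀ + p₁ * y + p₂ * y ^ 2) / (a + b * y))
      (2 * (p₀ * b ^ 2 - p₁ * a * b + p₂ * a ^ 2) / (a + b * x) ^ 3) x := by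
  have hD : ∀ y, HasDerivAt (fun y => a + b * y) b y := fun y =>
    (((hasDerivAt_id' y).const_mul b).const_add a).congr_deriv (mul_one b)
  have hP : ∀ y, HasDerivAt (fun y => p₀ + p₁ * y + p₂ * y ^ 2) (p₁ + 2 * p₂ * y) y :=
    fun y => ((((hasDerivAt_id' y).const_mul p₁).const_add p₀).fun_add
        ((hasDerivAt_pow 2 y).const_mul p₂)).congr_deriv (by norm_num; ring)
  have hQ : HasDerivAt (fun y => p₁ * a - p₀ * b + 2 * p₂ * a * y + p₂ * b * y ^ 2)
      (2 * p₂ * a + 2 * p₂ * b * x) x :=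
    ((((hasDerivAt_id' x).const_mul (2 * p₂ * a)).const_add (p₁ * a - p₀ * b)).fun_add
      ((hasDerivAt_pow 2 x).const_mul (p₂ * b))).congr_deriv (by norm_num; ring)
  have hnear : ∀ᶠ y in 𝓝 x, a + b * y ≠ 0 :=
    (continuous_const.add (continuous_const.mul continuous_id)).continuousAt.eventually_ne hx
  refine ⟨fun y => (p₁ * a - p₀ * b + 2 * p₂ * a * y + p₂ * b * y ^ 2) / (a + b * y) ^ 2,
    hnear.mono fun y hy => ?_, ?_⟩
  · refine ((hP y).div (hD y) hy).congr_deriv ?_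
    field_simp
    ring
  · refine (hQ.div ((hD x).fun_pow 2) (pow_ne_zero 2 hx)).congr_deriv ?_
    field_simp
    ring

theorem hasSecondDerivAt_div_affine (c a b : 𝕜) {x : 𝕜} (hx : a + b * x ≠ 0) :
    HasSecondDerivAt (fun y => c / (a + b * y)) (2 * c * b ^ 2 / (a + b * x) ^ 3) x := by
  simpa [mul_assoc] using hasSecondDerivAt_quadratic_div_affine c 0 0 a b hx

theorem stmt_12_general (c₀ c₂ mu lambar η fbar r : ℝ)
    (hc₀ : 0 < c₀) (hc₂ : 0 < c₂) (hmu : 0 < mu) (hlam : 0 < lambar)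
    (hη : 0 < η) (hη1 : η < 1) (hr : 0 < r) :
    ∀ f ∈ Set.Ioo ((lambar + mu) * r / (η * lambar + mu)) fbar,
      deriv (deriv (fun f : ℝ =>
        -(c₀ * ((lambar / mu) * ((r - η * f) * (η * f - f))
            / (lambar * (r - η * f) + mu * (r - f))))
          - c₂ / (fbar - f))) f < 0 := by
  rintro f ⟨hf_low, hf_high⟩
  set a := (lambar + mu) * r
  set b := -(η * lambar + mu)
  set p₁ := lambar / mu * (η - 1) * r
  set p₂ := lambar / mu * (1 - η) * η
  have hD : a + b * f < 0 := by
    rw [div_lt_iff₀ (by positivity)] at hf_low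
    linarith
  have hu : (fun f : ℝ =>
        -(c₀ * ((lambar / mu) * ((r - η * f) * (η * f - f))
            / (lambar * (r - η * f) + mu * (r - f)))) - c₂ / (fbar - f))
      = fun y => c₀ * -1 * ((0 + p₁ * y + p₂ * y ^ 2) / (a + b * y))
          - c₂ / (fbar + -1 * y) := by
    funext y
    rw [show lambar / mu * ((r - η * y) * (η * y - y)) = 0 + p₁ * y + p₂ * y ^ 2 by ring,
      show lambar * (r - η * y) + mu * (r - y) = a + b * y by ring,
      show fbar - y = fbar + -1 * y by ring]
    ring
  have hK : 0 * b ^ 2 - p₁ * a * b + p₂ * a ^ 2 < 0 := by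
    have hK_eq : 0 * b ^ 2 - p₁ * a * b + p₂ * a ^ 2
        = -(lambar * (lambar + mu) * r ^ 2 * (1 - η) ^ 2) := by
      simp only [a, b, p₁, p₂]
      field_simp
      ring
    have : 0 < 1 - η := sub_pos.2 hη1
    rw [hK_eq]
    exact neg_neg_of_pos (by positivity)
  have hX : 0 < 2 * (0 * b ^ 2 - p₁ * a * b + p₂ * a ^ 2) / (a + b * f) ^ 3 :=
    div_pos_of_neg_of_neg (by linarith) (Odd.pow_neg (by decide) hD)
  have hfbar_sub : 0 < fbar + -1 * f := by linarith
  have hC : 0 < 2 * c₂ * (-1) ^ 2 / (fbar + -1 * f) ^ 3 := by positivity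
  rw [hu, (((hasSecondDerivAt_quadratic_div_affine 0 p₁ p₂ a b hD.ne).const_mul (c₀ * -1)).sub
    (hasSecondDerivAt_div_affine c₂ fbar (-1) hfbar_sub.ne')).deriv_deriv]
  linarith [mul_pos hc₀ hX]

/-- The SO's utility u₂(λ̄, f) = −c₀X̄(λ̄, μ, f) − c₂/(f̄−f) is strictly concave
in f on ((λ̄+μ)r/(ηλ̄+μ), f̄): its second derivative is strictly negative. -/
theorem stmt_12 (c₀ c₂ mu lambar η fbar r : ℝ)
    (hc₀ : 0 < c₀) (hc₂ : 0 < c₂) (hmu : 0 < mu) (hlam : 0 < lambar)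
    (hη : 0 < η) (hη1 : η < 1) (hfbar : 0 < fbar) (hr : 0 < r)
    (hint : (lambar + mu) * r / (η * lambar + mu) < fbar) :
    ∀ f ∈ Set.Ioo ((lambar + mu) * r / (η * lambar + mu)) fbar,
      deriv (deriv (fun f : ℝ =>
        -(c₀ * ((lambar / mu) * ((r - η * f) * (η * f - f))
            / (lambar * (r - η * f) + mu * (r - f))))
          - c₂ / (fbar - f))) f < 0 :=
  stmt_12_general c₀ c₂ mu lambar η fbar r hc₀ hc₂ hmu hlam hη hη1 hr
end

section
/- (Theorem 1, necessity of stability) If λ̄ ≥ μ(r−f̄)/(−(r−ηf̄)), then for every f ∈ [0, f̄], r ≥ (μf + λ̄ηf)/(λ̄+μ), hence X̄(λ̄, μ, f) = +∞; in particular no pure-strategy Nash equilibrium with finite utilities exists. -/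
/-- PDQ long-time average queue length (extended-real valued), with f' = ηf. -/
noncomputable def Xbar (r η lam mu f : ℝ) : EReal :=
  if r ≤ η * f then (0 : EReal)
  else if r < (mu * f + lam * (η * f)) / (lam + mu) then
    (((lam / mu) * ((r - η * f) * (η * f - f)) / (lam * (r - η * f) + mu * (r - f)) : ℝ) : EReal)
  else ⊤

/-- Theorem 1 (necessity of stability): if λ̄ ≥ μ(r−f̄)/(−(r−ηf̄)), then for
every f ∈ [0, f̄] we have r ≥ (μf + λ̄ηf)/(λ̄+μ) and X̄(λ̄, μ, f) = +∞. -/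
theorem stmt_15 (mu lambar η fbar r : ℝ)
    (hmu : 0 < mu) (hlam : 0 < lambar) (hη : 0 < η) (hη1 : η < 1)
    (hfbar : 0 < fbar) (hr1 : η * fbar < r) (hr2 : r < fbar)
    (hunstab : mu * (r - fbar) / (-(r - η * fbar)) ≤ lambar) :
    ∀ f ∈ Set.Icc (0:ℝ) fbar,
      (mu * f + lambar * (η * f)) / (lambar + mu) ≤ r ∧
      Xbar r η lambar mu f = ⊤ := by
  intro f hf
  obtain ⟨hf0, hffbar⟩ := hf
  have hd : -(r - η * fbar) < 0 := by linarith
  have key : lambar * (-(r - η * fbar)) ≤ mu * (r - fbar) := by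
    rw [div_le_iff_of_neg hd] at hunstab
    linarith
  have hmain : (mu * f + lambar * (η * f)) / (lambar + mu) ≤ r := by
    rw [div_le_iff₀ (by linarith)]
    nlinarith [mul_nonneg (le_of_lt hmu) (sub_nonneg.mpr hffbar),
      mul_nonneg (mul_nonneg hlam.le hη.le) (sub_nonneg.mpr hffbar)]
  refine ⟨hmain, ?_⟩
  have h1 : ¬ r ≤ η * f := by
    push_neg
    calc η * f ≤ η * fbar := by nlinarith
    _ < r := hr1
  have h2 : ¬ r < (mu * f + lambar * (η * f)) / (lambar + mu) := not_lt.mpr hmain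
  simp [Xbar, h1, h2]
end

section
/- (Theorem 2, exhaustive recovery) Suppose f₀' < r < f₀, λ̄ < μ̄(r−f₀)/(−(r−f₀')), μ̄ < μ̂ where μ̂ is the unique stationary point of μ ↦ u₂'(λ̄, μ), and c₁ ≤ c₀(r−f₀')(f₀'−f₀)/(μ̄[λ̄(r−f₀')+μ̄(r−f₀)]). Then (λ̄, μ̄) is a Nash equilibrium: λ̄ maximizes u₁'(·, μ̄) over [0, λ̄] and μ̄ maximizes u₂'(λ̄, ·) over [0, μ̄]. -/
/-- Attacker's utility u₁'(λ, μ) = c₀X̄(λ, μ, f₀) − c₁λ. -/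
noncomputable def u1' (c₀ c₁ r η f₀ : ℝ) (lam mu : ℝ) : EReal :=
  (c₀ : EReal) * Xbar r η lam mu f₀ - ((c₁ * lam : ℝ) : EReal)

/-- SO's utility u₂'(λ, μ) = −c₀X̄(λ, μ, f₀) − c₂'μ. -/
noncomputable def u2' (c₀ c₂' r η f₀ : ℝ) (lam mu : ℝ) : EReal :=
  -((c₀ : EReal) * Xbar r η lam mu f₀) - ((c₂' * mu : ℝ) : EReal)

/-!
On the stable region the attacker's queue length is `X̄(λ, μ̄) = λ · s(λ)` with
`s(λ) = K / (μ̄ (λ(r - f₀') + μ̄(r - f₀)))`, `K = (r - f₀')(f₀' - f₀) < 0`. The denominator is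
negative and increasing in `λ`, so `s` increases, and
`c₀X̄ - c₁λ = λ (c₀ s(λ) - c₁) ≤ λ (c₀ s(λ̄) - c₁) ≤ λ̄ (c₀ s(λ̄) - c₁)`,
the last factor being nonnegative by (2.3c).

The operator's payoff `μ ↦ u₂'(λ̄, μ)` is `⊥` on the unstable region `μ ≤ μ₀` and tends to `-∞`
as `μ ↓ μ₀`, where the queue blows up. Its derivative does not vanish on `(μ₀, μ̂)`, so by
Darboux's theorem it has constant sign there, necessarily positive; hence the payoff increases
on `(μ₀, μ̂) ∋ μ̄`.
-/

open Filter Set Topology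

theorem strictMonoOn_Ioo_of_deriv_ne_zero_of_tendsto_atBot {f : ℝ → ℝ} {a b : ℝ}
    (hf' : ∀ x ∈ Ioo a b, deriv f x ≠ 0) (hf : Tendsto f (𝓝[>] a) atBot) :
    StrictMonoOn f (Ioo a b) := by
  have hdiff (x) (hx : x ∈ Ioo a b) : DifferentiableAt ℝ f x :=
    differentiableAt_of_deriv_ne_zero (hf' x hx)
  have hcont : ContinuousOn f (Ioo a b) := fun x hx =>
    (hdiff x hx).continuousAt.continuousWithinAt
  rcases hasDerivWithinAt_forall_lt_or_forall_gt_of_forall_ne (convex_Ioo a b)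
    (fun x hx => (hdiff x hx).hasDerivAt.hasDerivWithinAt) hf' with hneg | hpos
  · -- a decreasing `f` could not tend to `-∞` at `a`
    rintro x hx - - -
    have hanti : StrictAntiOn f (Ioo a b) :=
      strictAntiOn_of_deriv_neg (convex_Ioo a b) hcont (by rwa [interior_Ioo])
    obtain ⟨z, hfz, hz⟩ := ((hf.eventually_lt_atBot (f x)).and
      (Ioo_mem_nhdsGT hx.1)).exists
    exact absurd (hanti ⟨hz.1, hz.2.trans hx.2⟩ hx hz.2) (not_lt.mpr hfz.le)
  · exact strictMonoOn_of_deriv_pos (convex_Ioo a b) hcont (by rwa [interior_Ioo])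

noncomputable def Xstable (r f' f lam mu : ℝ) : ℝ :=
  (lam / mu) * ((r - f') * (f' - f)) / (lam * (r - f') + mu * (r - f))

section Xstable

variable {r f' f : ℝ}

theorem Xstable_eq_mul (lam mu : ℝ) :
    Xstable r f' f lam mu
      = lam * ((r - f') * (f' - f) / (mu * (lam * (r - f') + mu * (r - f)))) := by
  simp only [Xstable, div_eq_mul_inv, mul_inv]; ring

theorem mul_Xstable_sub_le_of_le {c₀ c₁ l L μ : ℝ} (hc₀ : 0 ≤ c₀) (hr' : f' < r) (hr : r < f)
    (hμ : 0 < μ) (hl : 0 ≤ l) (hlL : l ≤ L) (hL : L * (r - f') + μ * (r - f) < 0)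
    (hc₁ : c₁ ≤ c₀ * ((r - f') * (f' - f)) / (μ * (L * (r - f') + μ * (r - f)))) :
    c₀ * Xstable r f' f l μ - c₁ * l ≤ c₀ * Xstable r f' f L μ - c₁ * L := by
  set s : ℝ → ℝ := fun l => (r - f') * (f' - f) / (μ * (l * (r - f') + μ * (r - f)))
  have hK : (r - f') * (f' - f) ≤ 0 := mul_nonpos_of_nonneg_of_nonpos (by linarith) (by linarith)
  have hDL : μ * (L * (r - f') + μ * (r - f)) < 0 := mul_neg_of_pos_of_neg hμ hL
  have hDl : μ * (l * (r - f') + μ * (r - f)) ≤ μ * (L * (r - f') + μ * (r - f)) := by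
    gcongr
  have hs : s l ≤ s L := by
    simp only [s, div_eq_mul_one_div ((r - f') * (f' - f))]
    exact mul_le_mul_of_nonpos_left (one_div_le_one_div_of_neg_of_le hDL hDl) hK
  have hsL : c₁ ≤ c₀ * s L := by rwa [← mul_div_assoc]
  calc c₀ * Xstable r f' f l μ - c₁ * l = l * (c₀ * s l - c₁) := by
        rw [Xstable_eq_mul]; ring
    _ ≤ l * (c₀ * s L - c₁) := by gcongr
    _ ≤ L * (c₀ * s L - c₁) := by gcongr
    _ = c₀ * Xstable r f' f L μ - c₁ * L := by rw [Xstable_eq_mul]; ring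

theorem tendsto_Xstable_atTop {L μ₀ : ℝ} (hr' : f' < r) (hr : r < f) (hL : 0 < L)
    (hμ₀ : L * (r - f') + μ₀ * (r - f) = 0) :
    Tendsto (Xstable r f' f L) (𝓝[>] μ₀) atTop := by
  have hμ₀pos : 0 < μ₀ := by nlinarith
  have hnum : Tendsto (fun m => L / m * ((r - f') * (f' - f))) (𝓝[>] μ₀)
      (𝓝 (L / μ₀ * ((r - f') * (f' - f)))) :=
    ((continuousAt_const.div continuousAt_id hμ₀pos.ne').mul continuousAt_const).tendsto.mono_left
      nhdsWithin_le_nhds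
  have hden : Tendsto (fun m => L * (r - f') + m * (r - f)) (𝓝[>] μ₀) (𝓝[<] 0) := by
    refine tendsto_nhdsWithin_of_tendsto_nhds_of_eventually_within _ ?_ ?_
    · rw [← hμ₀]
      exact (continuous_const.add (continuous_id.mul continuous_const)).tendsto μ₀ |>.mono_left
        nhdsWithin_le_nhds
    · filter_upwards [self_mem_nhdsWithin] with m hm
      exact mem_Iio.mpr (by nlinarith [mem_Ioi.mp hm])
  exact hnum.neg_mul_atBot
    (mul_neg_of_pos_of_neg (div_pos hL hμ₀pos) (mul_neg_of_pos_of_neg (by linarith) (by linarith)))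
    (tendsto_inv_nhdsLT_zero.comp hden)

end Xstable

section Payoffs

variable {c₀ r η lam mu f : ℝ}

theorem Xbar_of_stable (hη : η * f < r) (hsum : 0 < lam + mu)
    (hD : lam * (r - η * f) + mu * (r - f) < 0) :
    Xbar r η lam mu f = Xstable r (η * f) f lam mu := by
  rw [Xbar, if_neg (not_le.mpr hη), if_pos (by rw [lt_div_iff₀ hsum]; linarith), Xstable]

theorem Xbar_of_unstable (hη : η * f < r) (hsum : 0 < lam + mu)
    (hD : 0 ≤ lam * (r - η * f) + mu * (r - f)) :
    Xbar r η lam mu f = ⊤ := by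
  rw [Xbar, if_neg (not_le.mpr hη), if_neg (by rw [not_lt, div_le_iff₀ hsum]; linarith)]

theorem u1'_of_stable {c₁ : ℝ} (hη : η * f < r) (hsum : 0 < lam + mu)
    (hD : lam * (r - η * f) + mu * (r - f) < 0) :
    u1' c₀ c₁ r η f lam mu = ((c₀ * Xstable r (η * f) f lam mu - c₁ * lam : ℝ) : EReal) := by
  rw [u1', Xbar_of_stable hη hsum hD]; norm_cast

theorem u2'_of_stable {c₂ : ℝ} (hη : η * f < r) (hsum : 0 < lam + mu)
    (hD : lam * (r - η * f) + mu * (r - f) < 0) :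
    u2' c₀ c₂ r η f lam mu = ((-(c₀ * Xstable r (η * f) f lam mu) - c₂ * mu : ℝ) : EReal) := by
  rw [u2', Xbar_of_stable hη hsum hD]; norm_cast

theorem u2'_of_unstable {c₂ : ℝ} (hc₀ : 0 < c₀) (hη : η * f < r) (hsum : 0 < lam + mu)
    (hD : 0 ≤ lam * (r - η * f) + mu * (r - f)) :
    u2' c₀ c₂ r η f lam mu = ⊥ := by
  rw [u2', Xbar_of_unstable hη hsum hD, EReal.coe_mul_top_of_pos hc₀, EReal.neg_top,
    EReal.bot_sub]

end Payoffs

theorem stmt_17_general (c₀ c₁ c₂' r η f₀ f₀' lambar mubar muhat : ℝ)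
    (hc₀ : 0 < c₀) (hf₀' : f₀' = η * f₀)
    (hlambar : 0 < lambar) (hmubar : 0 < mubar)
    (hr1 : f₀' < r) (hr2 : r < f₀)
    -- condition (2.3a)
    (hstab : lambar < mubar * (r - f₀) / (-(r - f₀')))
    -- μ̂ is the unique stationary point of μ ↦ u₂'(λ̄, μ) on the stable region
    (huniq : ∀ m : ℝ, lambar * (r - f₀') / (f₀ - r) < m →
      deriv (fun m : ℝ =>
        -(c₀ * ((lambar / m) * ((r - f₀') * (f₀' - f₀))
            / (lambar * (r - f₀') + m * (r - f₀)))) - c₂' * m) m = 0 → m = muhat)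
    -- condition (2.3b)
    (hmu : mubar < muhat)
    -- condition (2.3c)
    (hc1le : c₁ ≤ c₀ * ((r - f₀') * (f₀' - f₀))
        / (mubar * (lambar * (r - f₀') + mubar * (r - f₀)))) :
    (∀ lam ∈ Set.Icc (0:ℝ) lambar,
        u1' c₀ c₁ r η f₀ lam mubar ≤ u1' c₀ c₁ r η f₀ lambar mubar) ∧
    (∀ mu ∈ Set.Icc (0:ℝ) mubar,
        u2' c₀ c₂' r η f₀ lambar mu ≤ u2' c₀ c₂' r η f₀ lambar mubar) := by
  subst hf₀'
  have hstable : lambar * (r - η * f₀) + mubar * (r - f₀) < 0 := by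
    rw [lt_div_iff_of_neg (by linarith)] at hstab
    linarith
  refine ⟨fun lam ⟨hlam0, hlam⟩ => ?_, fun mu ⟨hmu0, hmule⟩ => ?_⟩
  · rw [u1'_of_stable hr1 (by linarith) (by nlinarith), u1'_of_stable hr1 (by linarith) hstable,
      EReal.coe_le_coe_iff]
    exact mul_Xstable_sub_le_of_le hc₀.le hr1 hr2 hmubar hlam0 hlam hstable hc1le
  set μ₀ := lambar * (r - η * f₀) / (f₀ - r)
  have hμ₀ : lambar * (r - η * f₀) + μ₀ * (r - f₀) = 0 := by
    simp only [μ₀]; field_simp [(by linarith : f₀ - r ≠ 0)]; ring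
  rcases le_or_gt mu μ₀ with hunstable | hgt
  · rw [u2'_of_unstable hc₀ hr1 (by linarith) (by nlinarith)]
    exact bot_le
  rw [u2'_of_stable hr1 (by linarith) (by nlinarith), u2'_of_stable hr1 (by linarith) hstable,
    EReal.coe_le_coe_iff]
  have hbot : Tendsto (fun m => -(c₀ * Xstable r (η * f₀) f₀ lambar m) - c₂' * m) (𝓝[>] μ₀)
      atBot := by
    have hX := (tendsto_Xstable_atTop hr1 hr2 hlambar hμ₀).const_mul_atTop hc₀
    have hcost : Tendsto (fun m : ℝ => -(c₂' * m)) (𝓝[>] μ₀) (𝓝 (-(c₂' * μ₀))) :=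
      ((continuous_const.mul continuous_id).neg.tendsto μ₀).mono_left nhdsWithin_le_nhds
    simpa only [sub_eq_add_neg, Function.comp_def] using
      (tendsto_neg_atTop_atBot.comp hX).atBot_add hcost
  have hmono := strictMonoOn_Ioo_of_deriv_ne_zero_of_tendsto_atBot
    (fun m hm hm0 => hm.2.ne (huniq m hm.1 hm0)) hbot
  exact hmono.monotoneOn ⟨hgt, by linarith⟩ ⟨by linarith, hmu⟩ hmule

/-- Theorem 2 (exhaustive recovery resource): under conditions (2.3a)–(2.3c),
(λ̄, μ̄) is a Nash equilibrium. -/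
theorem stmt_17 (c₀ c₁ c₂' r η f₀ f₀' lambar mubar muhat : ℝ)
    (hc₀ : 0 < c₀) (hc₁ : 0 < c₁) (hc₂' : 0 < c₂')
    (hη : 0 < η) (hη1 : η < 1) (hf₀' : f₀' = η * f₀)
    (hlambar : 0 < lambar) (hmubar : 0 < mubar)
    (hr1 : f₀' < r) (hr2 : r < f₀)
    -- condition (2.3a)
    (hstab : lambar < mubar * (r - f₀) / (-(r - f₀')))
    -- μ̂ is the unique stationary point of μ ↦ u₂'(λ̄, μ) on the stable region
    (hmuhat : lambar * (r - f₀') / (f₀ - r) < muhat)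
    (hstat : deriv (fun m : ℝ =>
        -(c₀ * ((lambar / m) * ((r - f₀') * (f₀' - f₀))
            / (lambar * (r - f₀') + m * (r - f₀)))) - c₂' * m) muhat = 0)
    (huniq : ∀ m : ℝ, lambar * (r - f₀') / (f₀ - r) < m →
      deriv (fun m : ℝ =>
        -(c₀ * ((lambar / m) * ((r - f₀') * (f₀' - f₀))
            / (lambar * (r - f₀') + m * (r - f₀)))) - c₂' * m) m = 0 → m = muhat)
    -- condition (2.3b)
    (hmu : mubar < muhat)
    -- condition (2.3c)
    (hc1le : c₁ ≤ c₀ * ((r - f₀') * (f₀' - f₀))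
        / (mubar * (lambar * (r - f₀') + mubar * (r - f₀)))) :
    (∀ lam ∈ Set.Icc (0:ℝ) lambar,
        u1' c₀ c₁ r η f₀ lam mubar ≤ u1' c₀ c₁ r η f₀ lambar mubar) ∧
    (∀ mu ∈ Set.Icc (0:ℝ) mubar,
        u2' c₀ c₂' r η f₀ lambar mu ≤ u2' c₀ c₂' r η f₀ lambar mubar) :=
  stmt_17_general c₀ c₁ c₂' r η f₀ f₀' lambar mubar muhat hc₀ hf₀' hlambar hmubar hr1 hr2 hstab
    huniq hmu hc1le
end
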